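/- Let (Z,d) be a metric space, U a finite nonempty set, β ∈ (0,1) with βα_Z < 1, c : Z×U → ℝ bounded measurable with |c(z,u) − c(z',u)| ≤ ‖c‖_∞ d(z,z') for all z, z' ∈ Z and u ∈ U, and let η be a Markov kernel from Z×U to Z satisfying the bounded-Lipschitz contraction condition with constant α_Z. Let F : Z → Z be measurable with sup_{z∈Z} d(z, F(z)) ≤ L̄ < ∞. Let J* : Z → ℝ be a bounded Lipschitz function satisfying J*(z) = min_{u∈U} ( c(z,u) + β ∫ J*(z₁) η(dz₁|z,u) ) for all z, let J^N : Z → ℝ be a bounded measurable function satisfying J^N(z) = min_{u∈U} ( c(F(z),u) + β ∫ J^N(z₁) η(dz₁|F(z),u) ) for all z, let γ_N : Z → U be a measurable selector with c(F(z),γ_N(z)) + β ∫ J^N(z₁) η(dz₁|F(z),γ_N(z)) = J^N(z) for all z, and let J_{γ_N} : Z → ℝ be a bounded measurable function satisfying J_{γ_N}(z) = c(z,γ_N(z)) + β ∫ J_{γ_N}(z₁) η(dz₁|z,γ_N(z)) for all z. Then sup_{z∈Z} |J_{γ_N}(z) − J*(z)| ≤ ( 2(1 + (α_Z − 1)β)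 / ((1 − β)³ (1 − α_Z β)) ) ‖c‖_∞ L̄. -/

import Mathlib

open MeasureTheory

noncomputable section

/-- `‖f‖_BL ≤ c` with respect to the distance-like function `d`:
there are `a, b ≥ 0` with `a + b ≤ c` such that `f` is bounded by `a` and
`b`-Lipschitz with respect to `d`. -/
def blNormLE {S : Type*} (d : S → S → ℝ) (f : S → ℝ) (c : ℝ) : Prop :=
  ∃ a b : ℝ, 0 ≤ a ∧ 0 ≤ b ∧ a + b ≤ c ∧ (∀ x, |f x| ≤ a) ∧
    ∀ x y, |f x - f y| ≤ b * d x y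

/-- Sup norm `‖c‖_∞` of a two-variable (stage cost) function. -/
def supNorm {Z U : Type*} (c : Z → U → ℝ) : ℝ :=
  ⨆ p : Z × U, |c p.1 p.2|

/-- The bounded-Lipschitz contraction condition for the kernel `η` with constant `αZ`:
`|∫ f dη(·|z,u) − ∫ f dη(·|z',u)| ≤ αZ ‖f‖_BL d(z,z')` for every bounded Lipschitz `f`. -/
def blContract {Z U : Type*} [MeasurableSpace Z] [MetricSpace Z]
    (η : Z → U → Measure Z) (αZ : ℝ) : Prop :=
  ∀ (f : Z → ℝ) (C : ℝ), blNormLE dist f C → ∀ (u : U) (z z' : Z),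
    |∫ x, f x ∂(η z u) - ∫ x, f x ∂(η z' u)| ≤ αZ * C * dist z z'

end

/-!
The optimal cost `J*` is a fixed point of the Bellman operator, a `β`-contraction in sup norm;
the bounded-Lipschitz contraction of `η` makes it also shrink Lipschitz constants by `βα_Z`.
Hence `‖J*‖_∞ ≤ ‖c‖_∞ / (1 - β) =: a` and `J*` is `ℓ`-Lipschitz with
`ℓ = (‖c‖_∞ + βα_Z a) / (1 - βα_Z)`. As `J^N` solves the Bellman equation at `F z` and
`d(z, F z) ≤ L̄`, this gives `‖J^N - J*‖_∞ ≤ ℓL̄ / (1 - β) =: Δ`. Finally `J_{γ_N}` is the fixed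
point of the `β`-contractive evaluation operator of `γ_N`, and `γ_N` fails to be greedy for `J*`
by at most `(‖c‖_∞ + βα_Z (a + ℓ)) L̄ + (1 + β) Δ`; dividing by `1 - β` once more gives the bound.
Every estimate comes from iterating a self-improving bound `M ↦ rM + s` down to `s / (1 - r)`.
-/

open MeasureTheory Filter Topology

theorem abs_ciInf_sub_ciInf_le_of_finite {U : Type*} [Finite U] [Nonempty U] (f g : U → ℝ)
    {K : ℝ} (h : ∀ u, |f u - g u| ≤ K) : |(⨅ u, f u) - ⨅ u, g u| ≤ K := by
  have key : ∀ f g : U → ℝ, (∀ u, |f u - g u| ≤ K) → (⨅ u, f u) - K ≤ ⨅ u, g u :=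
    fun f g h ↦ le_ciInf fun u ↦ by
      linarith [ciInf_le (Set.finite_range f).bddBelow u, (abs_le.1 (h u)).2]
  rw [abs_sub_le_iff]
  exact ⟨by linarith [key f g h], by linarith [key g f fun u ↦ abs_sub_comm (f u) (g u) ▸ h u]⟩

theorem abs_ciInf_le_of_finite {U : Type*} [Finite U] [Nonempty U] (f : U → ℝ) {K : ℝ}
    (h : ∀ u, |f u| ≤ K) : |⨅ u, f u| ≤ K := by
  simpa using abs_ciInf_sub_ciInf_le_of_finite f (fun _ ↦ 0) (by simpa using h)

section ProbabilityMeasure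

variable {Ω : Type*} [MeasurableSpace Ω] {μ : Measure Ω} [IsProbabilityMeasure μ]

theorem abs_integral_le_of_abs_le {f : Ω → ℝ} {M : ℝ} (h : ∀ x, |f x| ≤ M) :
    |∫ x, f x ∂μ| ≤ M := by
  simpa using norm_integral_le_of_norm_le_const (μ := μ) (f := f) (C := M)
    (Eventually.of_forall h)

theorem integrable_of_abs_le {f : Ω → ℝ} (hf : Measurable f) {M : ℝ} (h : ∀ x, |f x| ≤ M) :
    Integrable f μ :=
  .of_bound hf.aestronglyMeasurable M
    (Eventually.of_forall fun x ↦ (Real.norm_eq_abs _).trans_le (h x))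

theorem abs_integral_sub_integral_le {f g : Ω → ℝ} (hf : Integrable f μ) (hg : Integrable g μ)
    {M : ℝ} (h : ∀ x, |f x - g x| ≤ M) : |(∫ x, f x ∂μ) - ∫ x, g x ∂μ| ≤ M := by
  rw [← integral_sub hf hg]
  exact abs_integral_le_of_abs_le h

end ProbabilityMeasure

section SelfImproving

variable {ι : Type*} {r s : ℝ}

theorem le_div_one_sub_mul_of_self_improving {g w : ι → ℝ} (hw : ∀ i, 0 ≤ w i) (hr0 : 0 ≤ r)
    (hr1 : r < 1) (hs : 0 ≤ s) (hbdd : ∃ M₀, ∀ i, g i ≤ M₀ * w i)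
    (hstep : ∀ M, 0 ≤ M → (∀ i, g i ≤ M * w i) → ∀ i, g i ≤ (r * M + s) * w i) (i : ι) :
    g i ≤ s / (1 - r) * w i := by
  obtain ⟨M₀, h₀⟩ := hbdd
  set L := s / (1 - r)
  have hL : r * L + s = L := by
    simp only [L]; field_simp [(by linarith : (1 - r) ≠ 0)]; ring
  have hL0 : 0 ≤ L := div_nonneg hs (by linarith)
  set D := max M₀ L - L
  have hD : 0 ≤ D := sub_nonneg.2 (le_max_right _ _)
  -- the bounds `L + rⁿ D` are the iterates of `M ↦ rM + s` started at `max M₀ L`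
  have hiter : ∀ n : ℕ, ∀ i, g i ≤ (L + r ^ n * D) * w i := by
    intro n
    induction n with
    | zero =>
      simpa [D] using fun i ↦ (h₀ i).trans (mul_le_mul_of_nonneg_right (le_max_left _ _) (hw i))
    | succ n ih =>
      have e : r * (L + r ^ n * D) + s = L + r ^ (n + 1) * D := by linear_combination hL
      simpa only [e] using hstep _ (add_nonneg hL0 (mul_nonneg (pow_nonneg hr0 n) hD)) ih
  have hlim : Tendsto (fun n : ℕ ↦ (L + r ^ n * D) * w i) atTop (𝓝 ((L + 0 * D) * w i)) :=
    (((tendsto_pow_atTop_nhds_zero_of_lt_one hr0 hr1).mul_const D).const_add L).mul_const _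
  simpa using ge_of_tendsto' hlim fun n ↦ hiter n i

theorem le_div_one_sub_of_self_improving {g : ι → ℝ} (hr0 : 0 ≤ r) (hr1 : r < 1) (hs : 0 ≤ s)
    (hbdd : ∃ M₀, ∀ i, g i ≤ M₀)
    (hstep : ∀ M, 0 ≤ M → (∀ i, g i ≤ M) → ∀ i, g i ≤ r * M + s) (i : ι) :
    g i ≤ s / (1 - r) := by
  simpa using le_div_one_sub_mul_of_self_improving (w := fun _ ↦ 1) (fun _ ↦ zero_le_one) hr0 hr1
    hs (by simpa using hbdd) (by simpa using hstep) i

end SelfImproving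

theorem abs_le_supNorm {Z U : Type*} {c : Z → U → ℝ} (hc : ∃ M, ∀ z u, |c z u| ≤ M) (z : Z)
    (u : U) : |c z u| ≤ supNorm c := by
  obtain ⟨M, hM⟩ := hc
  exact le_ciSup (f := fun p : Z × U ↦ |c p.1 p.2|) ⟨M, by rintro _ ⟨p, rfl⟩; exact hM p.1 p.2⟩
    (z, u)

noncomputable def qValue {Z U : Type*} [MeasurableSpace Z] (c : Z → U → ℝ) (β : ℝ)
    (η : Z → U → Measure Z) (J : Z → ℝ) (z : Z) (u : U) : ℝ :=
  c z u + β * ∫ x, J x ∂(η z u)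

section QValue

variable {Z U : Type*} [MeasurableSpace Z] {c : Z → U → ℝ} {β : ℝ} {η : Z → U → Measure Z}

theorem abs_qValue_le [∀ z u, IsProbabilityMeasure (η z u)] {J : Z → ℝ} {k M : ℝ} (hβ : 0 ≤ β)
    (hc : ∀ z u, |c z u| ≤ k) (hJ : ∀ z, |J z| ≤ M) (z : Z) (u : U) :
    |qValue c β η J z u| ≤ k + β * M := by
  unfold qValue
  calc |c z u + β * ∫ x, J x ∂(η z u)| ≤ |c z u| + β * |∫ x, J x ∂(η z u)| :=
        (abs_add_le _ _).trans_eq (by rw [abs_mul, abs_of_nonneg hβ])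
    _ ≤ k + β * M := by gcongr; exacts [hc z u, abs_integral_le_of_abs_le hJ]

theorem abs_qValue_sub_qValue_le {J J' : Z → ℝ} {z : Z} {u : U} {M : ℝ}
    [IsProbabilityMeasure (η z u)] (hβ : 0 ≤ β) (hJ : Integrable J (η z u))
    (hJ' : Integrable J' (η z u)) (h : ∀ x, |J x - J' x| ≤ M) :
    |qValue c β η J z u - qValue c β η J' z u| ≤ β * M := by
  have e : qValue c β η J z u - qValue c β η J' z u =
      β * ((∫ x, J x ∂(η z u)) - ∫ x, J' x ∂(η z u)) := by unfold qValue; ring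
  rw [e, abs_mul, abs_of_nonneg hβ]
  exact mul_le_mul_of_nonneg_left (abs_integral_sub_integral_le hJ hJ' h) hβ

theorem abs_qValue_sub_qValue_le_dist [MetricSpace Z] {J : Z → ℝ} {k α C : ℝ} (hβ : 0 ≤ β)
    (hc : ∀ z z' u, |c z u - c z' u| ≤ k * dist z z') (hη : blContract η α)
    (hJ : blNormLE dist J C) (z z' : Z) (u : U) :
    |qValue c β η J z u - qValue c β η J z' u| ≤ (k + β * α * C) * dist z z' := by
  have e : qValue c β η J z u - qValue c β η J z' u =
      (c z u - c z' u) + β * ((∫ x, J x ∂(η z u)) - ∫ x, J x ∂(η z' u)) := by unfold qValue; ring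
  rw [e]
  calc _ ≤ |c z u - c z' u| + β * |(∫ x, J x ∂(η z u)) - ∫ x, J x ∂(η z' u)| :=
        (abs_add_le _ _).trans_eq (by rw [abs_mul, abs_of_nonneg hβ])
    _ ≤ k * dist z z' + β * (α * C * dist z z') := by
        gcongr; exacts [hc z z' u, hη J C hJ u z z']
    _ = (k + β * α * C) * dist z z' := by ring

end QValue

section ValueFunction

variable {Z U : Type*} [MeasurableSpace Z] {c : Z → U → ℝ} {β : ℝ} {η : Z → U → Measure Z}

theorem abs_le_of_eq_iInf_qValue [Finite U] [Nonempty U] [∀ z u, IsProbabilityMeasure (η z u)]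
    {J : Z → ℝ} {k : ℝ} (hβ0 : 0 ≤ β) (hβ1 : β < 1) (hk : 0 ≤ k) (hc : ∀ z u, |c z u| ≤ k)
    (hJb : ∃ M, ∀ z, |J z| ≤ M) (hJ : ∀ z, J z = ⨅ u, qValue c β η J z u) (z : Z) :
    |J z| ≤ k / (1 - β) :=
  le_div_one_sub_of_self_improving (g := fun z ↦ |J z|) hβ0 hβ1 hk hJb
    (fun _ _ hM z ↦ hJ z ▸ (abs_ciInf_le_of_finite _ (abs_qValue_le hβ0 hc hM z)).trans_eq
      (add_comm _ _)) z

theorem abs_sub_le_mul_dist_of_eq_iInf_qValue [MetricSpace Z] [Finite U] [Nonempty U]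
    {J : Z → ℝ} {k α a : ℝ} (hβ0 : 0 ≤ β) (hα : 0 ≤ α) (hβα : β * α < 1) (hk : 0 ≤ k)
    (ha : 0 ≤ a) (hc : ∀ z z' u, |c z u - c z' u| ≤ k * dist z z') (hη : blContract η α)
    (hJa : ∀ z, |J z| ≤ a) (hJlip : ∃ b, ∀ z z', |J z - J z'| ≤ b * dist z z')
    (hJ : ∀ z, J z = ⨅ u, qValue c β η J z u) (z z' : Z) :
    |J z - J z'| ≤ (k + β * α * a) / (1 - β * α) * dist z z' := by
  obtain ⟨b, hb⟩ := hJlip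
  refine le_div_one_sub_mul_of_self_improving (g := fun p : Z × Z ↦ |J p.1 - J p.2|)
    (fun _ ↦ dist_nonneg) (by positivity) hβα (by positivity) ⟨b, fun p ↦ hb p.1 p.2⟩ ?_ (z, z')
  rintro M hM hJM ⟨z, z'⟩
  have hbl : blNormLE dist J (a + M) := ⟨a, M, ha, hM, le_rfl, hJa, fun x y ↦ hJM (x, y)⟩
  dsimp only
  rw [hJ z, hJ z']
  exact abs_ciInf_sub_ciInf_le_of_finite _ _ fun u ↦
    (abs_qValue_sub_qValue_le_dist hβ0 hc hη hbl z z' u).trans_eq (by ring)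

theorem abs_sub_le_of_eq_iInf_qValue_comp [Finite U] [Nonempty U]
    [∀ z u, IsProbabilityMeasure (η z u)] {J J' : Z → ℝ} {F : Z → Z} {ε : ℝ} (hβ0 : 0 ≤ β)
    (hβ1 : β < 1) (hε : 0 ≤ ε) (hJm : Measurable J) (hJb : ∃ M, ∀ z, |J z| ≤ M)
    (hJ'm : Measurable J') (hJ'b : ∃ M, ∀ z, |J' z| ≤ M)
    (hJ : ∀ z, J z = ⨅ u, qValue c β η J z u) (hJ' : ∀ z, J' z = ⨅ u, qValue c β η J' (F z) u)
    (hJF : ∀ z, |J (F z) - J z| ≤ ε) (z : Z) :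
    |J' z - J z| ≤ ε / (1 - β) := by
  obtain ⟨M, hM⟩ := hJb
  obtain ⟨M', hM'⟩ := hJ'b
  refine le_div_one_sub_of_self_improving (g := fun z ↦ |J' z - J z|) hβ0 hβ1 hε
    ⟨M' + M, fun z ↦ (abs_sub _ _).trans (add_le_add (hM' z) (hM z))⟩ (fun D _ hD z ↦ ?_) z
  have hstep : |J' z - J (F z)| ≤ β * D := by
    rw [hJ' z, hJ (F z)]
    exact abs_ciInf_sub_ciInf_le_of_finite _ _ fun u ↦ abs_qValue_sub_qValue_le hβ0
      (integrable_of_abs_le hJ'm hM') (integrable_of_abs_le hJm hM) hD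
  calc |J' z - J z| ≤ |J' z - J (F z)| + |J (F z) - J z| := abs_sub_le _ _ _
    _ ≤ β * D + ε := add_le_add hstep (hJF z)

theorem abs_qValue_sub_le_of_selector [MetricSpace Z] [∀ z u, IsProbabilityMeasure (η z u)]
    {J J' : Z → ℝ} {F : Z → Z} {γ : Z → U} {k α C Δ : ℝ} (hβ0 : 0 ≤ β)
    (hc : ∀ z z' u, |c z u - c z' u| ≤ k * dist z z') (hη : blContract η α)
    (hJ : blNormLE dist J C) (hJm : Measurable J) (hJ'm : Measurable J')
    (hJ'b : ∃ M, ∀ z, |J' z| ≤ M) (hsel : ∀ z, qValue c β η J' (F z) (γ z) = J' z)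
    (hΔ : ∀ z, |J' z - J z| ≤ Δ) (z : Z) :
    |qValue c β η J z (γ z) - J z| ≤ (k + β * α * C) * dist z (F z) + (1 + β) * Δ := by
  obtain ⟨a, -, -, -, -, hJa, -⟩ := id hJ
  obtain ⟨M', hM'⟩ := hJ'b
  have hmodel := abs_qValue_sub_qValue_le_dist hβ0 hc hη hJ z (F z) (γ z)
  have hvalue : |qValue c β η J (F z) (γ z) - qValue c β η J' (F z) (γ z)| ≤ β * Δ :=
    abs_qValue_sub_qValue_le hβ0 (integrable_of_abs_le hJm hJa) (integrable_of_abs_le hJ'm hM')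
      fun x ↦ abs_sub_comm (J x) (J' x) ▸ hΔ x
  have e : qValue c β η J z (γ z) - J z =
      (qValue c β η J z (γ z) - qValue c β η J (F z) (γ z)) +
      (qValue c β η J (F z) (γ z) - qValue c β η J' (F z) (γ z)) + (J' z - J z) := by
    rw [hsel z]; ring
  rw [e]
  calc _ ≤ |qValue c β η J z (γ z) - qValue c β η J (F z) (γ z)| +
        |qValue c β η J (F z) (γ z) - qValue c β η J' (F z) (γ z)| + |J' z - J z| :=
        abs_add_three _ _ _
    _ ≤ (k + β * α * C) * dist z (F z) + β * Δ + Δ := by gcongr; exact hΔ z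
    _ = (k + β * α * C) * dist z (F z) + (1 + β) * Δ := by ring

theorem abs_sub_le_of_eq_qValue_policy [∀ z u, IsProbabilityMeasure (η z u)]
    {J Jγ : Z → ℝ} {γ : Z → U} {s : ℝ} (hβ0 : 0 ≤ β) (hβ1 : β < 1) (hs : 0 ≤ s)
    (hJm : Measurable J) (hJb : ∃ M, ∀ z, |J z| ≤ M) (hJγm : Measurable Jγ)
    (hJγb : ∃ M, ∀ z, |Jγ z| ≤ M) (hJγ : ∀ z, Jγ z = qValue c β η Jγ z (γ z))
    (hgap : ∀ z, |qValue c β η J z (γ z) - J z| ≤ s) (z : Z) :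
    |Jγ z - J z| ≤ s / (1 - β) := by
  obtain ⟨M, hM⟩ := hJb
  obtain ⟨Mγ, hMγ⟩ := hJγb
  refine le_div_one_sub_of_self_improving (g := fun z ↦ |Jγ z - J z|) hβ0 hβ1 hs
    ⟨Mγ + M, fun z ↦ (abs_sub _ _).trans (add_le_add (hMγ z) (hM z))⟩ (fun D _ hD z ↦ ?_) z
  have hstep : |qValue c β η Jγ z (γ z) - qValue c β η J z (γ z)| ≤ β * D :=
    abs_qValue_sub_qValue_le hβ0 (integrable_of_abs_le hJγm hMγ) (integrable_of_abs_le hJm hM) hD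
  calc |Jγ z - J z|
      ≤ |qValue c β η Jγ z (γ z) - qValue c β η J z (γ z)| + |qValue c β η J z (γ z) - J z| := by
        rw [← hJγ z]; exact abs_sub_le _ _ _
    _ ≤ β * D + s := add_le_add hstep (hgap z)

end ValueFunction

theorem statement11_general {Z U : Type*} [MetricSpace Z] [MeasurableSpace Z] [BorelSpace Z]
    [Fintype U] [Nonempty U]
    (β : ℝ) (hβ0 : 0 < β) (hβ1 : β < 1)
    (c : Z → U → ℝ)
    (hc_bdd : ∃ M : ℝ, ∀ (z : Z) (u : U), |c z u| ≤ M)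
    (hc_lip : ∀ (z z' : Z) (u : U), |c z u - c z' u| ≤ supNorm c * dist z z')
    (η : Z → U → MeasureTheory.Measure Z)
    (hη_prob : ∀ (z : Z) (u : U), MeasureTheory.IsProbabilityMeasure (η z u))
    (αZ : ℝ) (hαZ : 0 ≤ αZ)
    (hη_contract : blContract η αZ)
    (hβαZ : β * αZ < 1)
    (F : Z → Z)
    (Lbar : ℝ) (hF_close : ∀ z : Z, dist z (F z) ≤ Lbar)
    (Jstar : Z → ℝ)
    (hJstar_bl : ∃ C : ℝ, blNormLE dist Jstar C)
    (hJstar_fix : ∀ z : Z, Jstar z = ⨅ u : U, (c z u + β * ∫ z₁, Jstar z₁ ∂(η z u)))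
    (JN : Z → ℝ)
    (hJN_meas : Measurable JN)
    (hJN_bdd : ∃ M : ℝ, ∀ z : Z, |JN z| ≤ M)
    (hJN_fix : ∀ z : Z, JN z = ⨅ u : U, (c (F z) u + β * ∫ z₁, JN z₁ ∂(η (F z) u)))
    (γN : Z → U)
    (hγN_sel : ∀ z : Z,
      c (F z) (γN z) + β * ∫ z₁, JN z₁ ∂(η (F z) (γN z)) = JN z)
    (JγN : Z → ℝ)
    (hJγN_meas : Measurable JγN)
    (hJγN_bdd : ∃ M : ℝ, ∀ z : Z, |JγN z| ≤ M)
    (hJγN_fix : ∀ z : Z,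
      JγN z = c z (γN z) + β * ∫ z₁, JγN z₁ ∂(η z (γN z))) :
    ∀ z : Z, |JγN z - Jstar z| ≤
      2 * (1 + (αZ - 1) * β) / ((1 - β) ^ 3 * (1 - αZ * β)) * supNorm c * Lbar := by
  intro z₀
  set k := supNorm c
  have hk := abs_le_supNorm hc_bdd
  have hk0 : 0 ≤ k := (abs_nonneg _).trans (hk z₀ (Classical.arbitrary U))
  have hL0 : 0 ≤ Lbar := dist_nonneg.trans (hF_close z₀)
  have h1β : 0 < 1 - β := by linarith
  have h1βα : 0 < 1 - β * αZ := by linarith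
  obtain ⟨_, a₀, b₀, -, -, -, hJa₀, hJb₀⟩ := hJstar_bl
  have hJstar_meas : Measurable Jstar :=
    (LipschitzWith.of_dist_le' (K := b₀) hJb₀).continuous.measurable
  set a := k / (1 - β)
  have hJa : ∀ z, |Jstar z| ≤ a := abs_le_of_eq_iInf_qValue hβ0.le hβ1 hk0 hk ⟨a₀, hJa₀⟩ hJstar_fix
  set ℓ := (k + β * αZ * a) / (1 - β * αZ)
  have hJℓ : ∀ z z', |Jstar z - Jstar z'| ≤ ℓ * dist z z' :=
    abs_sub_le_mul_dist_of_eq_iInf_qValue hβ0.le hαZ hβαZ hk0 (by positivity) hc_lip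
      hη_contract hJa ⟨b₀, hJb₀⟩ hJstar_fix
  set Δ := ℓ * Lbar / (1 - β)
  have hΔ : ∀ z, |JN z - Jstar z| ≤ Δ :=
    abs_sub_le_of_eq_iInf_qValue_comp hβ0.le hβ1 (by positivity) hJstar_meas ⟨a, hJa⟩ hJN_meas
      hJN_bdd hJstar_fix hJN_fix fun z ↦ (hJℓ _ _).trans <| by
        rw [dist_comm]; gcongr; exact hF_close z
  have hbl : blNormLE dist Jstar (a + ℓ) := ⟨a, ℓ, by positivity, by positivity, le_rfl, hJa, hJℓ⟩
  have hgap (z : Z) :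
      |qValue c β η Jstar z (γN z) - Jstar z| ≤ (k + β * αZ * (a + ℓ)) * Lbar + (1 + β) * Δ :=
    (abs_qValue_sub_le_of_selector hβ0.le hc_lip hη_contract hbl hJstar_meas hJN_meas hJN_bdd
      hγN_sel hΔ z).trans (by gcongr; exact hF_close z)
  refine (abs_sub_le_of_eq_qValue_policy hβ0.le hβ1 (by positivity) hJstar_meas ⟨a, hJa⟩
    hJγN_meas hJγN_bdd hJγN_fix hgap z₀).trans_eq ?_
  have h1αβ : 1 - αZ * β ≠ 0 := by rw [mul_comm]; exact h1βα.ne'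
  simp only [Δ, ℓ, a]
  field_simp
  ring

theorem statement11 {Z U : Type*} [MetricSpace Z] [MeasurableSpace Z] [BorelSpace Z]
    [Fintype U] [Nonempty U] [MeasurableSpace U]
    (β : ℝ) (hβ0 : 0 < β) (hβ1 : β < 1)
    (c : Z → U → ℝ)
    (hc_meas : ∀ u : U, Measurable fun z : Z => c z u)
    (hc_bdd : ∃ M : ℝ, ∀ (z : Z) (u : U), |c z u| ≤ M)
    (hc_lip : ∀ (z z' : Z) (u : U), |c z u - c z' u| ≤ supNorm c * dist z z')
    (η : Z → U → MeasureTheory.Measure Z)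
    (hη_meas : ∀ u : U, Measurable fun z : Z => η z u)
    (hη_prob : ∀ (z : Z) (u : U), MeasureTheory.IsProbabilityMeasure (η z u))
    (αZ : ℝ) (hαZ : 0 ≤ αZ)
    (hη_contract : blContract η αZ)
    (hβαZ : β * αZ < 1)
    (F : Z → Z) (hF_meas : Measurable F)
    (Lbar : ℝ) (hF_close : ∀ z : Z, dist z (F z) ≤ Lbar)
    (Jstar : Z → ℝ)
    (hJstar_bl : ∃ C : ℝ, blNormLE dist Jstar C)
    (hJstar_fix : ∀ z : Z, Jstar z = ⨅ u : U, (c z u + β * ∫ z₁, Jstar z₁ ∂(η z u)))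
    (JN : Z → ℝ)
    (hJN_meas : Measurable JN)
    (hJN_bdd : ∃ M : ℝ, ∀ z : Z, |JN z| ≤ M)
    (hJN_fix : ∀ z : Z, JN z = ⨅ u : U, (c (F z) u + β * ∫ z₁, JN z₁ ∂(η (F z) u)))
    (γN : Z → U) (hγN_meas : Measurable γN)
    (hγN_sel : ∀ z : Z,
      c (F z) (γN z) + β * ∫ z₁, JN z₁ ∂(η (F z) (γN z)) = JN z)
    (JγN : Z → ℝ)
    (hJγN_meas : Measurable JγN)
    (hJγN_bdd : ∃ M : ℝ, ∀ z : Z, |JγN z| ≤ M)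
    (hJγN_fix : ∀ z : Z,
      JγN z = c z (γN z) + β * ∫ z₁, JγN z₁ ∂(η z (γN z))) :
    ∀ z : Z, |JγN z - Jstar z| ≤
      2 * (1 + (αZ - 1) * β) / ((1 - β) ^ 3 * (1 - αZ * β)) * supNorm c * Lbar :=
  statement11_general β hβ0 hβ1 c hc_bdd hc_lip η hη_prob αZ hαZ hη_contract hβαZ F Lbar hF_close
    Jstar hJstar_bl hJstar_fix JN hJN_meas hJN_bdd hJN_fix γN hγN_sel JγN hJγN_meas hJγN_bdd
    hJγN_fix
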